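/- Let δ ∈ (0,1) and let K̃: [0,1] → Sym_n(ℝ) be continuous. For ε ∈ [0,1] let C_ε: [0,1] → Sym_n(ℝ) be continuous with sup_t ‖C_ε(t)‖ ≤ ε, and set K̃_ε(t) = K̃(t) + C_ε(t)/(1−t)^δ. Let N_ε solve N_ε'(t) = K̃_ε(t)N_ε(t), N_ε(0) = I on [0,1). Then lim_{t→1} N_ε(t) exists, sup_{0≤t<1} ‖N_ε(t)‖ < ∞, and there is a constant C independent of ε such that sup_{0≤t<1} ‖N_ε(t) − N₀(t)‖ ≤ Cε for all sufficiently small ε. -/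

import Mathlib

/-!
Write `A_ε = K̃ + (1 - t)^(-δ) C_ε`. For `ε ≤ 1` we have `‖A_ε(t)‖ ≤ M + (1 - t)^(-δ)`, and the
singular weight has the primitive `G(t) = (1 - (1 - t)^(1-δ)) / (1 - δ)`, which is continuous up
to `t = 1` and bounded by `1 / (1 - δ)`. Gronwall's lemma in differential form, with comparison
function `exp (n (M t + G t))`, therefore bounds `N_ε` uniformly on `[0, 1)`; then `‖N_ε'‖` is
dominated by the derivative of `n B (M t + G t)`, so `N_ε` is Cauchy as `t → 1`. The difference
`D = N_ε - N_0` solves `D' = A_0 D + (1 - t)^(-δ) (C_ε - C_0) N_ε`, and the same Gronwall lemma with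
forcing term `n B ε (1 - t)^(-δ)` gives `‖D‖ ≤ C ε`. The factor `n` comes from `‖A B‖ ≤ n ‖A‖ ‖B‖`
for the entrywise sup norm.
-/

attribute [local instance] Matrix.normedAddCommGroup Matrix.normedSpace

open Set Filter Topology Real

section

variable {E : Type*} [NormedAddCommGroup E]

theorem HasDerivWithinAt.Ici_of_Ico [NormedSpace ℝ E] {f : ℝ → E} {f' : E} {a b x : ℝ}
    (hx : x ∈ Ico a b) (hf : HasDerivWithinAt f f' (Ico a b) x) : HasDerivWithinAt f f' (Ici x) x :=
  hf.mono_of_mem_nhdsWithin <| mem_of_superset (Ico_mem_nhdsGE hx.2) (Ico_subset_Ico_left hx.1)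

theorem norm_le_exp_mul_of_norm_deriv_le [NormedSpace ℝ E] {f f' : ℝ → E} {φ Φ ψ Ψ : ℝ → ℝ}
    {a b : ℝ} (hf : ∀ x ∈ Ico a b, HasDerivWithinAt f (f' x) (Ico a b) x)
    (hΦ : ∀ x ∈ Ico a b, HasDerivAt Φ (φ x) x) (hΨ : ∀ x ∈ Ico a b, HasDerivAt Ψ (ψ x) x)
    (hΦa : Φ a = 0) (hφ : ∀ x ∈ Ico a b, 0 ≤ φ x) (hψ : ∀ x ∈ Ico a b, 0 ≤ ψ x)
    (ha : ‖f a‖ ≤ Ψ a) (bound : ∀ x ∈ Ico a b, ‖f' x‖ ≤ φ x * ‖f x‖ + ψ x) :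
    ∀ x ∈ Ico a b, ‖f x‖ ≤ exp (Φ x) * Ψ x := by
  intro x hx
  have hΦ_nonneg : ∀ y ∈ Ico a b, 0 ≤ Φ y := by
    have hmono : MonotoneOn Φ (Ico a b) :=
      monotoneOn_of_hasDerivWithinAt_nonneg (convex_Ico a b)
        (fun y hy => (hΦ y hy).continuousAt.continuousWithinAt)
        (fun y hy => (hΦ y (interior_subset hy)).hasDerivWithinAt)
        (fun y hy => hφ y (interior_subset hy))
    exact fun y hy => hΦa ▸ hmono (left_mem_Ico.2 (hy.1.trans_lt hy.2)) hy hy.1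
  have hsub : Icc a x ⊆ Ico a b := Icc_subset_Ico_right hx.2
  -- The fencing theorem needs a strict supersolution; the slack `η` is removed at the end.
  set B : ℝ → ℝ → ℝ := fun η y => exp (Φ y) * (Ψ y + η * (1 + (y - a))) with hB
  have hfence : ∀ η > 0, ‖f x‖ ≤ B η x := by
    intro η hη
    have hB' : ∀ y ∈ Ico a b, HasDerivAt (B η) (φ y * B η y + exp (Φ y) * (ψ y + η)) y := by
      intro y hy
      have hlin : HasDerivAt (fun y => η * (1 + (y - a))) η y := by
        simpa using (((hasDerivAt_id y).sub_const a).const_add 1).const_mul η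
      exact ((hΦ y hy).exp.mul ((hΨ y hy).add hlin)).congr_deriv
        (by simp only [hB, Pi.add_apply]; ring)
    refine image_norm_le_of_norm_deriv_right_lt_deriv_boundary' (B := B η)
      (fun y hy => (hf y (hsub hy)).continuousWithinAt.mono hsub)
      (fun y hy => (hf y (hsub (Ico_subset_Icc_self hy))).Ici_of_Ico
        (hsub (Ico_subset_Icc_self hy)))
      ?_ (fun y hy => (hB' y (hsub hy)).continuousAt.continuousWithinAt)
      (fun y hy => (hB' y (hsub (Ico_subset_Icc_self hy))).hasDerivWithinAt) ?_
      (right_mem_Icc.2 hx.1)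
    · simp only [hB, hΦa, exp_zero, one_mul, sub_self, add_zero, mul_one]
      linarith
    · intro y hy hfy
      have hy' := hsub (Ico_subset_Icc_self hy)
      have hexp : 1 ≤ exp (Φ y) := one_le_exp (hΦ_nonneg y hy')
      calc ‖f' y‖ ≤ φ y * ‖f y‖ + ψ y := bound y hy'
        _ < φ y * B η y + exp (Φ y) * (ψ y + η) := by
          rw [hfy]
          nlinarith [hψ y hy']
  have hlim : Tendsto (fun η => B η x) (𝓝[>] 0) (𝓝 (exp (Φ x) * Ψ x)) := by
    refine (Continuous.tendsto' (by fun_prop) 0 _ ?_).mono_left nhdsWithin_le_nhds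
    simp [hB]
  exact ge_of_tendsto hlim (eventually_nhdsWithin_of_forall hfence)

theorem exists_tendsto_nhdsLT_of_norm_sub_le [CompleteSpace E] {f : ℝ → E} {H : ℝ → ℝ}
    {a b l : ℝ} (hab : a < b) (hH : Tendsto H (𝓝[<] b) (𝓝 l))
    (hf : ∀ s ∈ Ico a b, ∀ t ∈ Ico a b, s ≤ t → ‖f t - f s‖ ≤ H t - H s) :
    ∃ L, Tendsto f (𝓝[<] b) (𝓝 L) := by
  refine cauchy_map_iff_exists_tendsto.1 (cauchy_map_iff'.2 ?_)
  refine Metric.uniformity_basis_dist.tendsto_right_iff.2 fun ε hε => ?_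
  have hnear : ∀ᶠ t in 𝓝[<] b, t ∈ Ico a b ∧ |H t - l| < ε / 2 :=
    Eventually.and (Ico_mem_nhdsLT hab) (Metric.tendsto_nhds.1 hH _ (half_pos hε))
  filter_upwards [hnear.prod_mk hnear]
  rintro ⟨s, t⟩ ⟨⟨hs, hHs⟩, ⟨ht, hHt⟩⟩
  dsimp only at *
  wlog hst : s ≤ t generalizing s t
  · rw [dist_comm]
    exact this t s ht hHt hs hHs (le_of_not_ge hst)
  rw [dist_eq_norm']
  calc ‖f t - f s‖ ≤ H t - H s := hf s hs t ht hst
    _ < ε := by linarith [abs_lt.1 hHs, abs_lt.1 hHt]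

end

theorem Matrix.norm_mul_le_card_mul {l m n α : Type*} [Fintype l] [Fintype m] [Fintype n]
    [NormedRing α] (A : Matrix l m α) (B : Matrix m n α) :
    ‖A * B‖ ≤ Fintype.card m * ‖A‖ * ‖B‖ := by
  refine (Matrix.norm_le_iff (by positivity)).2 fun i j => ?_
  calc ‖(A * B) i j‖ = ‖∑ k, A i k * B k j‖ := rfl
    _ ≤ ∑ k, ‖A i k‖ * ‖B k j‖ := norm_sum_le_of_le _ fun k _ => norm_mul_le _ _
    _ ≤ ∑ _k : m, ‖A‖ * ‖B‖ := by
      gcongr <;> exact Matrix.norm_entry_le_entrywise_sup_norm _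
    _ = Fintype.card m * ‖A‖ * ‖B‖ := by simp [mul_assoc]

section LinearODE

variable {ι : Type*} [Fintype ι] {a b : ℝ} {A N : ℝ → Matrix ι ι ℝ} {w W : ℝ → ℝ}

theorem norm_le_of_hasDerivWithinAt_matrix_mul
    (hN : ∀ t ∈ Ico a b, HasDerivWithinAt N (A t * N t) (Ico a b) t)
    (hW : ∀ t ∈ Ico a b, HasDerivAt W (w t) t) (hA : ∀ t ∈ Ico a b, ‖A t‖ ≤ w t) :
    ∀ t ∈ Ico a b, ‖N t‖ ≤ exp (Fintype.card ι * (W t - W a)) * ‖N a‖ :=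
  norm_le_exp_mul_of_norm_deriv_le (ψ := 0) hN
    (fun t ht => ((hW t ht).sub_const (W a)).const_mul _) (fun t _ => hasDerivAt_const t _)
    (by simp) (fun t ht => by have := (norm_nonneg _).trans (hA t ht); positivity)
    (fun _ _ => le_rfl) le_rfl fun t ht => by
      calc ‖A t * N t‖ ≤ Fintype.card ι * ‖A t‖ * ‖N t‖ := Matrix.norm_mul_le_card_mul _ _
        _ ≤ Fintype.card ι * w t * ‖N t‖ + 0 := by rw [add_zero]; gcongr; exact hA t ht

theorem norm_sub_le_of_hasDerivWithinAt_matrix_mul {B : ℝ}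
    (hN : ∀ t ∈ Ico a b, HasDerivWithinAt N (A t * N t) (Ico a b) t)
    (hW : ∀ t ∈ Ico a b, HasDerivAt W (w t) t) (hA : ∀ t ∈ Ico a b, ‖A t‖ ≤ w t)
    (hB : ∀ t ∈ Ico a b, ‖N t‖ ≤ B) :
    ∀ s ∈ Ico a b, ∀ t ∈ Ico a b, s ≤ t →
      ‖N t - N s‖ ≤ Fintype.card ι * B * W t - Fintype.card ι * B * W s := by
  intro s hs t ht hst
  have hsub : Ico s b ⊆ Ico a b := Ico_subset_Ico_left hs.1
  have key := norm_le_exp_mul_of_norm_deriv_le (f := fun x => N x - N s) (φ := 0) (Φ := 0)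
    (fun x hx => ((hN x (hsub hx)).sub_const (N s)).mono hsub) (fun x _ => hasDerivAt_const x 0)
    (fun x hx => ((hW x (hsub hx)).sub_const (W s)).const_mul (Fintype.card ι * B)) rfl
    (fun _ _ => le_rfl)
    (fun x hx => by
      have := (norm_nonneg _).trans (hB s hs)
      have := (norm_nonneg _).trans (hA x (hsub hx))
      positivity)
    (by simp) (fun x hx => by
      calc ‖A x * N x‖ ≤ Fintype.card ι * ‖A x‖ * ‖N x‖ := Matrix.norm_mul_le_card_mul _ _
        _ ≤ Fintype.card ι * w x * B := by
          have := (norm_nonneg _).trans (hA x (hsub hx))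
          gcongr
          exacts [hA x (hsub hx), hB x (hsub hx)]
        _ = 0 * ‖N x - N s‖ + Fintype.card ι * B * w x := by ring)
    t ⟨hst, ht.2⟩
  simpa [mul_sub] using key

theorem exists_tendsto_of_hasDerivWithinAt_matrix_mul {B l : ℝ} (hab : a < b)
    (hN : ∀ t ∈ Ico a b, HasDerivWithinAt N (A t * N t) (Ico a b) t)
    (hW : ∀ t ∈ Ico a b, HasDerivAt W (w t) t) (hWb : Tendsto W (𝓝[<] b) (𝓝 l))
    (hA : ∀ t ∈ Ico a b, ‖A t‖ ≤ w t) (hB : ∀ t ∈ Ico a b, ‖N t‖ ≤ B) :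
    ∃ L, Tendsto N (𝓝[<] b) (𝓝 L) :=
  exists_tendsto_nhdsLT_of_norm_sub_le hab (hWb.const_mul _)
    (norm_sub_le_of_hasDerivWithinAt_matrix_mul hN hW hA hB)

theorem norm_sub_le_of_norm_coeff_sub_le {A₀ A₁ N₀ N₁ : ℝ → Matrix ι ι ℝ} {v V : ℝ → ℝ}
    {B : ℝ} (hN₀ : ∀ t ∈ Ico a b, HasDerivWithinAt N₀ (A₀ t * N₀ t) (Ico a b) t)
    (hN₁ : ∀ t ∈ Ico a b, HasDerivWithinAt N₁ (A₁ t * N₁ t) (Ico a b) t) (hN₀₁ : N₁ a = N₀ a)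
    (hW : ∀ t ∈ Ico a b, HasDerivAt W (w t) t) (hA₀ : ∀ t ∈ Ico a b, ‖A₀ t‖ ≤ w t)
    (hV : ∀ t ∈ Ico a b, HasDerivAt V (v t) t) (hA₁ : ∀ t ∈ Ico a b, ‖A₁ t - A₀ t‖ ≤ v t)
    (hB : ∀ t ∈ Ico a b, ‖N₁ t‖ ≤ B) :
    ∀ t ∈ Ico a b, ‖N₁ t - N₀ t‖ ≤
      exp (Fintype.card ι * (W t - W a)) * (Fintype.card ι * B * (V t - V a)) := by
  refine norm_le_exp_mul_of_norm_deriv_le (fun t ht => (hN₁ t ht).sub (hN₀ t ht))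
    (fun t ht => ((hW t ht).sub_const (W a)).const_mul _)
    (fun t ht => ((hV t ht).sub_const (V a)).const_mul (Fintype.card ι * B)) (by simp)
    (fun t ht => by have := (norm_nonneg _).trans (hA₀ t ht); positivity)
    (fun t ht => by
      have := (norm_nonneg _).trans (hB t ht); have := (norm_nonneg _).trans (hA₁ t ht)
      positivity)
    (by simp [hN₀₁]) fun t ht => ?_
  have hsplit : A₁ t * N₁ t - A₀ t * N₀ t = A₀ t * (N₁ t - N₀ t) + (A₁ t - A₀ t) * N₁ t := by
    noncomm_ring
  have := (norm_nonneg _).trans (hA₀ t ht)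
  have := (norm_nonneg _).trans (hA₁ t ht)
  calc ‖A₁ t * N₁ t - A₀ t * N₀ t‖
      ≤ Fintype.card ι * ‖A₀ t‖ * ‖N₁ t - N₀ t‖ + Fintype.card ι * ‖A₁ t - A₀ t‖ * ‖N₁ t‖ := by
        rw [hsplit]
        exact (norm_add_le _ _).trans
          (add_le_add (Matrix.norm_mul_le_card_mul _ _) (Matrix.norm_mul_le_card_mul _ _))
    _ ≤ Fintype.card ι * w t * ‖N₁ t - N₀ t‖ + Fintype.card ι * v t * B := by
        gcongr
        exacts [hA₀ t ht, hA₁ t ht, hB t ht]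
    _ = _ := by ring

end LinearODE

section SingularWeight

variable {δ t : ℝ}

noncomputable def singularPrimitive (δ t : ℝ) : ℝ := (1 - (1 - t) ^ (1 - δ)) / (1 - δ)

theorem hasDerivAt_singularPrimitive (hδ : δ ≠ 1) (ht : t < 1) :
    HasDerivAt (singularPrimitive δ) ((1 - t) ^ (-δ)) t := by
  have hpow := ((hasDerivAt_id' t).const_sub 1).rpow_const (p := 1 - δ)
    (Or.inl (sub_ne_zero.2 ht.ne'))
  refine ((hpow.const_sub 1).div_const (1 - δ)).congr_deriv ?_
  have : 1 - δ ≠ 0 := sub_ne_zero.2 (Ne.symm hδ)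
  rw [show 1 - δ - 1 = -δ by ring]
  field_simp

@[simp]
theorem singularPrimitive_zero : singularPrimitive δ 0 = 0 := by simp [singularPrimitive]

theorem singularPrimitive_nonneg (hδ : δ < 1) (ht₀ : 0 ≤ t) (ht₁ : t ≤ 1) :
    0 ≤ singularPrimitive δ t :=
  div_nonneg (sub_nonneg.2 (rpow_le_one (by linarith) (by linarith) (by linarith)))
    (by linarith)

theorem singularPrimitive_le (hδ : δ < 1) (ht : t ≤ 1) : singularPrimitive δ t ≤ (1 - δ)⁻¹ := by
  rw [singularPrimitive, div_eq_mul_inv]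
  have := rpow_nonneg (sub_nonneg.2 ht) (1 - δ)
  have := inv_pos.2 (sub_pos.2 hδ)
  nlinarith

theorem continuousAt_singularPrimitive_one (hδ : δ < 1) : ContinuousAt (singularPrimitive δ) 1 :=
  ((continuousAt_const.sub ((continuousAt_const.sub continuousAt_id).rpow_const
    (Or.inr (by linarith)))).div_const _)

theorem mul_add_singularPrimitive_le {M : ℝ} (hδ : δ < 1) (hM : 0 ≤ M) (ht : t ≤ 1) :
    M * t + singularPrimitive δ t ≤ M + (1 - δ)⁻¹ := by
  have := singularPrimitive_le hδ ht
  nlinarith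

theorem norm_rpow_smul_le {E : Type*} [SeminormedAddCommGroup E] [NormedSpace ℝ E] {x : E}
    {c : ℝ} (ht : t ≤ 1) (hx : ‖x‖ ≤ c) : ‖(1 - t) ^ (-δ) • x‖ ≤ c * (1 - t) ^ (-δ) := by
  have hg := rpow_nonneg (sub_nonneg.2 ht) (-δ)
  rw [norm_smul, Real.norm_of_nonneg hg, mul_comm]
  gcongr

end SingularWeight

section SingularODE

variable {ι : Type*} [Fintype ι] {δ M : ℝ} {K C : ℝ → Matrix ι ι ℝ} {N : ℝ → Matrix ι ι ℝ}

theorem norm_coeff_le_of_singular (hK : ∀ t ∈ Ico (0:ℝ) 1, ‖K t‖ ≤ M)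
    (hC : ∀ t ∈ Ico (0:ℝ) 1, ‖C t‖ ≤ 1) :
    ∀ t ∈ Ico (0:ℝ) 1, ‖K t + (1 - t) ^ (-δ) • C t‖ ≤ M + (1 - t) ^ (-δ) := fun t ht =>
  (norm_add_le _ _).trans (add_le_add (hK t ht) ((norm_rpow_smul_le ht.2.le (hC t ht)).trans_eq
    (one_mul _)))

theorem hasDerivAt_mul_add_singularPrimitive (hδ : δ < 1) :
    ∀ t ∈ Ico (0:ℝ) 1,
      HasDerivAt (fun t => M * t + singularPrimitive δ t) (M + (1 - t) ^ (-δ)) t := fun t ht =>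
  ((hasDerivAt_id' t).const_mul M).add (hasDerivAt_singularPrimitive hδ.ne ht.2) |>.congr_deriv
    (by simp)

theorem norm_le_of_singular_ode (hδ : δ < 1)
    (hN : ∀ t ∈ Ico (0:ℝ) 1,
      HasDerivWithinAt N ((K t + (1 - t) ^ (-δ) • C t) * N t) (Ico 0 1) t)
    (hK : ∀ t ∈ Ico (0:ℝ) 1, ‖K t‖ ≤ M) (hC : ∀ t ∈ Ico (0:ℝ) 1, ‖C t‖ ≤ 1) :
    ∀ t ∈ Ico (0:ℝ) 1, ‖N t‖ ≤ exp (Fintype.card ι * (M + (1 - δ)⁻¹)) * ‖N 0‖ := by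
  intro t ht
  refine (norm_le_of_hasDerivWithinAt_matrix_mul hN (hasDerivAt_mul_add_singularPrimitive hδ)
    (norm_coeff_le_of_singular hK hC) t ht).trans ?_
  have hM := (norm_nonneg _).trans (hK t ht)
  rw [mul_zero, singularPrimitive_zero, add_zero, sub_zero]
  gcongr exp (_ * ?_) * _
  exact mul_add_singularPrimitive_le hδ hM ht.2.le

theorem exists_tendsto_of_singular_ode (hδ : δ < 1)
    (hN : ∀ t ∈ Ico (0:ℝ) 1,
      HasDerivWithinAt N ((K t + (1 - t) ^ (-δ) • C t) * N t) (Ico 0 1) t)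
    (hK : ∀ t ∈ Ico (0:ℝ) 1, ‖K t‖ ≤ M) (hC : ∀ t ∈ Ico (0:ℝ) 1, ‖C t‖ ≤ 1) :
    ∃ L, Tendsto N (𝓝[<] 1) (𝓝 L) :=
  exists_tendsto_of_hasDerivWithinAt_matrix_mul zero_lt_one hN
    (hasDerivAt_mul_add_singularPrimitive hδ)
    (((continuousAt_id.const_mul M).add (continuousAt_singularPrimitive_one hδ)).tendsto.mono_left
      nhdsWithin_le_nhds)
    (norm_coeff_le_of_singular hK hC) (norm_le_of_singular_ode hδ hN hK hC)

theorem norm_sub_le_of_singular_ode {C₀ C₁ N₀ N₁ : ℝ → Matrix ι ι ℝ} {B ε : ℝ} (hδ : δ < 1)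
    (hN₀ : ∀ t ∈ Ico (0:ℝ) 1,
      HasDerivWithinAt N₀ ((K t + (1 - t) ^ (-δ) • C₀ t) * N₀ t) (Ico 0 1) t)
    (hN₁ : ∀ t ∈ Ico (0:ℝ) 1,
      HasDerivWithinAt N₁ ((K t + (1 - t) ^ (-δ) • C₁ t) * N₁ t) (Ico 0 1) t)
    (hN₀₁ : N₁ 0 = N₀ 0) (hK : ∀ t ∈ Ico (0:ℝ) 1, ‖K t‖ ≤ M)
    (hC₀ : ∀ t ∈ Ico (0:ℝ) 1, ‖C₀ t‖ ≤ 1) (hC₁ : ∀ t ∈ Ico (0:ℝ) 1, ‖C₁ t - C₀ t‖ ≤ ε)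
    (hB : ∀ t ∈ Ico (0:ℝ) 1, ‖N₁ t‖ ≤ B) :
    ∀ t ∈ Ico (0:ℝ) 1, ‖N₁ t - N₀ t‖ ≤
      exp (Fintype.card ι * (M + (1 - δ)⁻¹)) * (Fintype.card ι * B * ((1 - δ)⁻¹ * ε)) := by
  intro t ht
  have hdiff := norm_sub_le_of_norm_coeff_sub_le hN₀ hN₁ hN₀₁
    (hasDerivAt_mul_add_singularPrimitive hδ) (norm_coeff_le_of_singular hK hC₀)
    (fun s hs => (hasDerivAt_singularPrimitive hδ.ne hs.2).const_mul ε)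
    (fun s hs => by
      rw [add_sub_add_left_eq_sub, ← smul_sub]
      exact norm_rpow_smul_le hs.2.le (hC₁ s hs)) hB t ht
  refine hdiff.trans ?_
  have hM := (norm_nonneg _).trans (hK t ht)
  have hε := (norm_nonneg _).trans (hC₁ t ht)
  have hB₀ := (norm_nonneg _).trans (hB t ht)
  have hG := singularPrimitive_nonneg hδ ht.1 ht.2.le
  rw [mul_zero, singularPrimitive_zero, add_zero, sub_zero, mul_zero, sub_zero, mul_comm ε]
  gcongr exp (_ * ?_) * (_ * (?_ * _))
  exacts [mul_add_singularPrimitive_le hδ hM ht.2.le, singularPrimitive_le hδ ht.2.le]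

end SingularODE

theorem singular_ode_perturbation_general (n : ℕ) (δ : ℝ) (hδ1 : δ < 1)
    (Ktil : ℝ → Matrix (Fin n) (Fin n) ℝ)
    (hKcont : ∀ i j, Continuous fun t => Ktil t i j)
    (C : ℝ → ℝ → Matrix (Fin n) (Fin n) ℝ)
    (hCbdd : ∀ ε ∈ Set.Icc (0:ℝ) 1, ∀ t ∈ Set.Icc (0:ℝ) 1, ‖C ε t‖ ≤ ε)
    (Nf : ℝ → ℝ → Matrix (Fin n) (Fin n) ℝ)
    (hN0 : ∀ ε ∈ Set.Icc (0:ℝ) 1, Nf ε 0 = 1)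
    (hN : ∀ ε ∈ Set.Icc (0:ℝ) 1, ∀ t ∈ Set.Ico (0:ℝ) 1,
      HasDerivWithinAt (Nf ε)
        ((Ktil t + ((1 - t) ^ (-δ) : ℝ) • C ε t) * Nf ε t) (Set.Ico 0 1) t) :
    (∀ ε ∈ Set.Icc (0:ℝ) 1,
      (∃ L, Filter.Tendsto (Nf ε) (nhdsWithin 1 (Set.Iio 1)) (nhds L))
      ∧ ∃ B : ℝ, ∀ t ∈ Set.Ico (0:ℝ) 1, ‖Nf ε t‖ ≤ B)
    ∧ ∃ Cc > (0:ℝ), ∃ ε₀ > (0:ℝ), ∀ ε, 0 ≤ ε → ε ≤ ε₀ → ε ≤ 1 →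
        ∀ t ∈ Set.Ico (0:ℝ) 1, ‖Nf ε t - Nf 0 t‖ ≤ Cc * ε := by
  obtain ⟨M, hM⟩ := isCompact_Icc.exists_bound_of_continuousOn
    (continuous_matrix hKcont).continuousOn (s := Icc (0:ℝ) 1)
  have h0 : (0:ℝ) ∈ Icc (0:ℝ) 1 := ⟨le_rfl, zero_le_one⟩
  have hK : ∀ t ∈ Ico (0:ℝ) 1, ‖Ktil t‖ ≤ M := fun t ht => hM t (Ico_subset_Icc_self ht)
  have hC : ∀ ε ∈ Icc (0:ℝ) 1, ∀ t ∈ Ico (0:ℝ) 1, ‖C ε t‖ ≤ ε := fun ε hε t ht =>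
    hCbdd ε hε t (Ico_subset_Icc_self ht)
  have hC₁ : ∀ ε ∈ Icc (0:ℝ) 1, ∀ t ∈ Ico (0:ℝ) 1, ‖C ε t‖ ≤ 1 := fun ε hε t ht =>
    (hC ε hε t ht).trans hε.2
  set B := exp (n * (M + (1 - δ)⁻¹)) * ‖(1 : Matrix (Fin n) (Fin n) ℝ)‖
  have hB : ∀ ε ∈ Icc (0:ℝ) 1, ∀ t ∈ Ico (0:ℝ) 1, ‖Nf ε t‖ ≤ B := fun ε hε t ht => by
    simpa [hN0 ε hε] using norm_le_of_singular_ode hδ1 (hN ε hε) hK (hC₁ ε hε) t ht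
  refine ⟨fun ε hε =>
    ⟨exists_tendsto_of_singular_ode hδ1 (hN ε hε) hK (hC₁ ε hε), B, hB ε hε⟩,
    exp (n * (M + (1 - δ)⁻¹)) * (n * B * (1 - δ)⁻¹) + 1,
    add_pos_of_nonneg_of_pos (by have := sub_pos.2 hδ1; positivity) one_pos, 1, one_pos,
    fun ε hε₀ _ hε₁ t ht => ?_⟩
  have hε : ε ∈ Icc (0:ℝ) 1 := ⟨hε₀, hε₁⟩
  have hdiff := norm_sub_le_of_singular_ode hδ1 (hN 0 h0) (hN ε hε)
    (by rw [hN0 ε hε, hN0 0 h0]) hK (hC₁ 0 h0)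
    (fun s hs => (norm_sub_le _ _).trans (by linarith [hC ε hε s hs, hC 0 h0 s hs]))
    (hB ε hε) t ht
  simp only [Fintype.card_fin] at hdiff
  calc ‖Nf ε t - Nf 0 t‖ ≤ _ := hdiff
    _ = exp (n * (M + (1 - δ)⁻¹)) * (n * B * (1 - δ)⁻¹) * ε := by ring
    _ ≤ _ := mul_le_mul_of_nonneg_right (le_add_of_nonneg_right zero_le_one) hε₀

/-- Perturbation estimate for linear ODEs with an integrable singularity `(1−t)^{−δ}`,
`0 < δ < 1`: if `N_ε` solves `N_ε' = (K̃ + (1−t)^{−δ} C_ε) N_ε`, `N_ε(0) = I`, with `K̃`,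
`C_ε` continuous symmetric and `‖C_ε(t)‖ ≤ ε`, then each `N_ε` is bounded on `[0,1)` with
a limit at `t = 1`, and `sup_{0≤t<1} ‖N_ε(t) − N₀(t)‖ ≤ Cε` for sufficiently small `ε`,
with `C` independent of `ε`. -/
theorem singular_ode_perturbation (n : ℕ) (δ : ℝ) (hδ0 : 0 < δ) (hδ1 : δ < 1)
    (Ktil : ℝ → Matrix (Fin n) (Fin n) ℝ)
    (hKsymm : ∀ t ∈ Set.Icc (0:ℝ) 1, (Ktil t).IsSymm)
    (hKcont : ∀ i j, Continuous fun t => Ktil t i j)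
    (C : ℝ → ℝ → Matrix (Fin n) (Fin n) ℝ)
    (hCsymm : ∀ ε ∈ Set.Icc (0:ℝ) 1, ∀ t ∈ Set.Icc (0:ℝ) 1, (C ε t).IsSymm)
    (hCcont : ∀ ε ∈ Set.Icc (0:ℝ) 1, ∀ i j, Continuous fun t => C ε t i j)
    (hCbdd : ∀ ε ∈ Set.Icc (0:ℝ) 1, ∀ t ∈ Set.Icc (0:ℝ) 1, ‖C ε t‖ ≤ ε)
    (Nf : ℝ → ℝ → Matrix (Fin n) (Fin n) ℝ)
    (hN0 : ∀ ε ∈ Set.Icc (0:ℝ) 1, Nf ε 0 = 1)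
    (hN : ∀ ε ∈ Set.Icc (0:ℝ) 1, ∀ t ∈ Set.Ico (0:ℝ) 1,
      HasDerivWithinAt (Nf ε)
        ((Ktil t + ((1 - t) ^ (-δ) : ℝ) • C ε t) * Nf ε t) (Set.Ico 0 1) t) :
    (∀ ε ∈ Set.Icc (0:ℝ) 1,
      (∃ L, Filter.Tendsto (Nf ε) (nhdsWithin 1 (Set.Iio 1)) (nhds L))
      ∧ ∃ B : ℝ, ∀ t ∈ Set.Ico (0:ℝ) 1, ‖Nf ε t‖ ≤ B)
    ∧ ∃ Cc > (0:ℝ), ∃ ε₀ > (0:ℝ), ∀ ε, 0 ≤ ε → ε ≤ ε₀ → ε ≤ 1 →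
        ∀ t ∈ Set.Ico (0:ℝ) 1, ‖Nf ε t - Nf 0 t‖ ≤ Cc * ε :=
  singular_ode_perturbation_general n δ hδ1 Ktil hKcont C hCbdd Nf hN0 hN
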